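/- Define f₁(x,θ) = 2m(1 - (1/4)(1 + 9x/(3+8θ))). For any θ, θ₀ > 0 and any a₁,...,a₅ ∈ (0,1], setting b_e = (√(3+8θ₀)/√(3+8θ))·a_e for leaf edges e ∈ {1,2,3,4} and b₅ = a₅, the six values f₁(a₁a₂,θ), f₁(a₁a₅a₃,θ), f₁(a₁a₅a₄,θ), f₁(a₂a₅a₃,θ), f₁(a₂a₅a₄,θ), f₁(a₃a₄,θ) equal the corresponding six values with parameters (b,θ₀) (assuming θ₀ ≤ θ so that b_e ≤ 1). Hence the parameters are not identifiable from 1-mer distances on the 4-leaf tree. -/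

import Mathlib

/-!
Only the ratio `x / (3 + 8θ)` enters `f₁`. Multiplying every leaf edge by
`c = √(3 + 8θ₀) / √(3 + 8θ)` multiplies each leaf-to-leaf path product by `c²`, since every such
path uses exactly two leaf edges, and `c² = (3 + 8θ₀) / (3 + 8θ)` exactly compensates the change
of `θ` to `θ₀`. For `θ₀ ≤ θ` we have `c ∈ (0, 1]`, so the rescaled parameters stay admissible.
-/

/-- The expected 1-mer distance f₁(x, θ) = 2m(1 - (1/4)(1 + 9x/(3+8θ))). -/
noncomputable def f1 (m : ℕ) (x θ : ℝ) : ℝ :=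
  2 * m * (1 - (1 / 4) * (1 + 9 * x / (3 + 8 * θ)))

theorem f1_eq_f1_div_mul (m : ℕ) (x : ℝ) {θ θ₀ : ℝ} (hθ : 3 + 8 * θ ≠ 0)
    (hθ₀ : 3 + 8 * θ₀ ≠ 0) : f1 m x θ = f1 m ((3 + 8 * θ₀) / (3 + 8 * θ) * x) θ₀ := by
  unfold f1
  field_simp

theorem sqrt_div_sqrt_mem_Ioc {s t : ℝ} (hs : 0 < s) (hst : s ≤ t) :
    Real.sqrt s / Real.sqrt t ∈ Set.Ioc (0 : ℝ) 1 :=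
  ⟨div_pos (Real.sqrt_pos.2 hs) (Real.sqrt_pos.2 (hs.trans_le hst)),
    div_le_one_of_le₀ (Real.sqrt_le_sqrt hst) (Real.sqrt_nonneg t)⟩

theorem mul_mem_Ioc_zero_one {x y : ℝ} (hx : x ∈ Set.Ioc (0 : ℝ) 1) (hy : y ∈ Set.Ioc (0 : ℝ) 1) :
    x * y ∈ Set.Ioc (0 : ℝ) 1 :=
  ⟨mul_pos hx.1 hy.1, mul_le_one₀ hx.2 hy.1.le hy.2⟩

theorem f1_eq_f1_sqrt_div_sqrt_sq_mul (m : ℕ) (x : ℝ) {θ θ₀ : ℝ} (hθ₀ : 0 < 3 + 8 * θ₀)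
    (hθ : 0 < 3 + 8 * θ) :
    f1 m x θ = f1 m ((Real.sqrt (3 + 8 * θ₀) / Real.sqrt (3 + 8 * θ)) ^ 2 * x) θ₀ := by
  rw [div_pow, Real.sq_sqrt hθ₀.le, Real.sq_sqrt hθ.le]
  exact f1_eq_f1_div_mul m x hθ.ne' hθ₀.ne'

theorem stmt_12_general (m : ℕ) (θ θ₀ : ℝ) (hθ₀ : 0 < θ₀)
    (hθθ : θ₀ ≤ θ) (a : Fin 5 → ℝ) (ha : ∀ e, a e ∈ Set.Ioc (0 : ℝ) 1) :
    let b : Fin 5 → ℝ := fun e =>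
      if e = 4 then a e else (Real.sqrt (3 + 8 * θ₀) / Real.sqrt (3 + 8 * θ)) * a e
    (∀ e, b e ∈ Set.Ioc (0 : ℝ) 1) ∧
    f1 m (a 0 * a 1) θ = f1 m (b 0 * b 1) θ₀ ∧
    f1 m (a 0 * a 4 * a 2) θ = f1 m (b 0 * b 4 * b 2) θ₀ ∧
    f1 m (a 0 * a 4 * a 3) θ = f1 m (b 0 * b 4 * b 3) θ₀ ∧
    f1 m (a 1 * a 4 * a 2) θ = f1 m (b 1 * b 4 * b 2) θ₀ ∧
    f1 m (a 1 * a 4 * a 3) θ = f1 m (b 1 * b 4 * b 3) θ₀ ∧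
    f1 m (a 2 * a 3) θ = f1 m (b 2 * b 3) θ₀ := by
  intro b
  set c := Real.sqrt (3 + 8 * θ₀) / Real.sqrt (3 + 8 * θ)
  have hθ₀' : 0 < 3 + 8 * θ₀ := by linarith
  have hc : c ∈ Set.Ioc (0 : ℝ) 1 := sqrt_div_sqrt_mem_Ioc hθ₀' (by linarith)
  have hrescale (x : ℝ) : f1 m x θ = f1 m (c ^ 2 * x) θ₀ :=
    f1_eq_f1_sqrt_div_sqrt_sq_mul m x hθ₀' (by linarith)
  have hleaf (e : Fin 5) (he : e ≠ 4) : b e = c * a e := if_neg he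
  have hinner : b 4 = a 4 := if_pos rfl
  have hcherry (i j : Fin 5) (hi : i ≠ 4) (hj : j ≠ 4) :
      f1 m (a i * a j) θ = f1 m (b i * b j) θ₀ := by
    rw [hleaf i hi, hleaf j hj, hrescale]
    congr 1
    ring
  have hacross (i j : Fin 5) (hi : i ≠ 4) (hj : j ≠ 4) :
      f1 m (a i * a 4 * a j) θ = f1 m (b i * b 4 * b j) θ₀ := by
    rw [hleaf i hi, hleaf j hj, hinner, hrescale]
    congr 1
    ring
  refine ⟨fun e => ?_, hcherry 0 1 (by decide) (by decide), hacross 0 2 (by decide) (by decide),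
    hacross 0 3 (by decide) (by decide), hacross 1 2 (by decide) (by decide),
    hacross 1 3 (by decide) (by decide), hcherry 2 3 (by decide) (by decide)⟩
  by_cases he : e = 4
  · rw [he, hinner]
    exact ha 4
  · rw [hleaf e he]
    exact mul_mem_Ioc_zero_one hc (ha e)

theorem stmt_12 (m : ℕ) (hm : 0 < m) (θ θ₀ : ℝ) (hθ : 0 < θ) (hθ₀ : 0 < θ₀)
    (hθθ : θ₀ ≤ θ) (a : Fin 5 → ℝ) (ha : ∀ e, a e ∈ Set.Ioc (0 : ℝ) 1) :
    let b : Fin 5 → ℝ := fun e =>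
      if e = 4 then a e else (Real.sqrt (3 + 8 * θ₀) / Real.sqrt (3 + 8 * θ)) * a e
    (∀ e, b e ∈ Set.Ioc (0 : ℝ) 1) ∧
    f1 m (a 0 * a 1) θ = f1 m (b 0 * b 1) θ₀ ∧
    f1 m (a 0 * a 4 * a 2) θ = f1 m (b 0 * b 4 * b 2) θ₀ ∧
    f1 m (a 0 * a 4 * a 3) θ = f1 m (b 0 * b 4 * b 3) θ₀ ∧
    f1 m (a 1 * a 4 * a 2) θ = f1 m (b 1 * b 4 * b 2) θ₀ ∧
    f1 m (a 1 * a 4 * a 3) θ = f1 m (b 1 * b 4 * b 3) θ₀ ∧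
    f1 m (a 2 * a 3) θ = f1 m (b 2 * b 3) θ₀ :=
  stmt_12_general m θ θ₀ hθ₀ hθθ a ha
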